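/- For even n ≥ 6, consider the 3×(n−1) matrix D with entries: D(1,i) = 3n+3−i; D(2,i) = 3n/2+(i−1)/2 for odd i, D(2,i) = n+i/2 for even i; D(3,i) = (i+3)/2 for odd i, D(3,i) = n/2+1+i/2 for even i. Then row 1 uses exactly [2n+4, 3n+2], row 2 exactly [n+1, 2n−1], row 3 exactly [2, n], and every column sums to 9n/2 + 4. -/
import Mathlib


/-- The second 3×(n−1) labeling matrix used for `f_n ∘ O_1`, even `n ≥ 6`. -/
def matD (n : ℤ) : Fin 3 → ℤ → ℤ
  | 0, i => 3 * n + 3 - i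
  | 1, i => if Odd i then 3 * n / 2 + (i - 1) / 2 else n + i / 2
  | 2, i => if Odd i then (i + 3) / 2 else n / 2 + 1 + i / 2

/-- For even `n ≥ 6`, row 1 of `matD n` (columns `1 ≤ i ≤ n−1`) uses exactly
`[2n+4, 3n+2]`, row 2 exactly `[n+1, 2n−1]`, row 3 exactly `[2, n]`, and
every column sums to `9n/2 + 4`. -/
theorem stmt_11 (n : ℤ) (hn : 6 ≤ n) (heven : Even n) :
    Set.BijOn (matD n 0) (Set.Icc 1 (n - 1)) (Set.Icc (2 * n + 4) (3 * n + 2)) ∧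
    Set.BijOn (matD n 1) (Set.Icc 1 (n - 1)) (Set.Icc (n + 1) (2 * n - 1)) ∧
    Set.BijOn (matD n 2) (Set.Icc 1 (n - 1)) (Set.Icc 2 n) ∧
    ∀ i ∈ Set.Icc 1 (n - 1), matD n 0 i + matD n 1 i + matD n 2 i
      = 9 * n / 2 + 4 := by
  obtain ⟨m, hm⟩ := heven
  refine ⟨?_, ?_, ?_, ?_⟩
  · apply Set.InvOn.bijOn (f' := fun y => 3 * n + 3 - y)
    · constructor
      · intro i hi; simp only [matD]; omega
      · intro y hy; simp only [matD]; omega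
    · intro i hi; simp only [matD, Set.mem_Icc] at hi ⊢; omega
    · intro y hy; simp only [Set.mem_Icc] at hy ⊢; omega
  · apply Set.InvOn.bijOn
      (f' := fun y => if 3 * n / 2 ≤ y then 2 * (y - 3 * n / 2) + 1 else 2 * (y - n))
    · constructor
      · intro i hi
        simp only [Set.mem_Icc] at hi
        simp only [matD, Int.odd_iff]
        split_ifs <;> omega
      · intro y hy
        simp only [Set.mem_Icc] at hy
        simp only [matD, Int.odd_iff]
        split_ifs <;> omega
    · intro i hi
      simp only [matD, Int.odd_iff, Set.mem_Icc] at hi ⊢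
      split_ifs <;> omega
    · intro y hy
      simp only [Set.mem_Icc] at hy ⊢
      split_ifs <;> omega
  · apply Set.InvOn.bijOn
      (f' := fun y => if y ≤ n / 2 + 1 then 2 * y - 3 else 2 * (y - n / 2 - 1))
    · constructor
      · intro i hi
        simp only [Set.mem_Icc] at hi
        simp only [matD, Int.odd_iff]
        split_ifs <;> omega
      · intro y hy
        simp only [Set.mem_Icc] at hy
        simp only [matD, Int.odd_iff]
        split_ifs <;> omega
    · intro i hi
      simp only [matD, Int.odd_iff, Set.mem_Icc] at hi ⊢
      split_ifs <;> omega
    · intro y hy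
      simp only [Set.mem_Icc] at hy ⊢
      split_ifs <;> omega
  · intro i hi
    simp only [Set.mem_Icc] at hi
    simp only [matD, Int.odd_iff]
    split_ifs <;> omega
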